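/- Let W be a finite-dimensional complex vector space and let V be a finite-dimensional linear subspace of Sym(W) spanned by homogeneous elements of positive degree. Then there exists r₀ such that for all r ≥ r₀ the following holds: a power series f ∈ Sym(V)[[t]] is rational if and only if its coefficientwise image under i_r in (Sym(W)^{⊗r})[[t]] is rational. -/

import Mathlib

/-- A power series over a commutative ring `A` is rational if there is a polynomial `q` with
constant term `1` such that `q·f` is a polynomial. -/
def IsRationalSeries {A : Type*} [CommRing A] (f : PowerSeries A) : Prop :=
  ∃ q p : Polynomial A, q.coeff 0 = 1 ∧ (q : PowerSeries A) * f = (p : PowerSeries A)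

/-- Concrete model of the map `i_r : Sym(V) → Sym(W)^{⊗r}`.  Here `Sym(W)` for `W = ℂ^N` is
modelled by the polynomial ring `ℂ[y_1, …, y_N]`, the subspace `V ⊆ Sym(W)` is given together
with a basis `b : Fin κ → V`, `Sym(V)` is modelled by the polynomial ring `ℂ[z_1, …, z_κ]`
(via the basis `b`), and `Sym(W)^{⊗r}` is modelled by the polynomial ring in `r` disjoint
copies of the variables, the `s`-th factor inclusion being the renaming `y_j ↦ y_{(s,j)}`.
The map `i_r` sends the basis vector `z_v` of `V` to `∑_{s=1}^r 1 ⊗ ⋯ ⊗ b v ⊗ ⋯ ⊗ 1`. -/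
noncomputable def iMap (N κ r : ℕ) (V : Submodule ℂ (MvPolynomial (Fin N) ℂ))
    (b : Module.Basis (Fin κ) ℂ V) :
    MvPolynomial (Fin κ) ℂ →ₐ[ℂ] MvPolynomial (Fin r × Fin N) ℂ :=
  MvPolynomial.aeval fun v : Fin κ =>
    ∑ s : Fin r, MvPolynomial.rename (Prod.mk s) ((b v : MvPolynomial (Fin N) ℂ))

/-!
For large `r` the map `i_r` has a left inverse `π`; since rationality is preserved by any ring
map applied coefficientwise, `π` carries rationality of the image back to `f`. A left inverse is
the same as points `g₁, …, g_r ∈ Sym(V)^N` with `∑ₛ f(gₛ) = f` for all `f ∈ V`, so it suffices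
that, for any commutative `ℂ`-algebra `A`, every linear map `V → A` is a finite sum of point
evaluations `f ↦ f(g)`, `g ∈ A^N`. Write `f(t w) = ∑ₑ cₑ(f) tᵉ` for `w ∈ ℂ^N`; then
`∑ⱼ f(uⱼ w) = ∑ₑ cₑ(f) ∑ⱼ uⱼᵉ`, and `c₀ = 0` because `V` has no constant terms. Every finite
sequence in `A` is a sequence of power sums `(∑ⱼ uⱼᵉ)_{1 ≤ e ≤ n}` (roots of unity isolate the
top exponent, and `∑ₖ ζ²ᵏ (ζᵏ + x)ᵐ = m (m + 1) x` for a primitive `(m+1)`-st root `ζ` writes `x`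
as a sum of `m`-th powers), so all maps `f ↦ f(w) a` arise; these span everything because the
evaluations at points of `ℂ^N` span the dual of `V`.
-/

open Finset MvPolynomial
open scoped Polynomial

lemma IsPrimitiveRoot.geom_sum_pow_eq_ite {K : Type*} [Field K] {ζ : K} {M : ℕ}
    (hζ : IsPrimitiveRoot ζ M) (n : ℕ) :
    ∑ k ∈ range M, (ζ ^ n) ^ k = if M ∣ n then (M : K) else 0 := by
  split_ifs with hn
  · simp [(hζ.pow_eq_one_iff_dvd n).2 hn]
  · have hne : ζ ^ n - 1 ≠ 0 := sub_ne_zero.2 fun h => hn ((hζ.pow_eq_one_iff_dvd n).1 h)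
    have := geom_sum_mul (ζ ^ n) M
    rw [pow_right_comm, hζ.pow_eq_one, one_pow, sub_self] at this
    exact (mul_eq_zero.1 this).resolve_right hne

section PowerSums

variable (A : Type*) [CommRing A] [Algebra ℂ A]

def powerSums : AddSubmonoid (ℕ → A) :=
  AddSubmonoid.closure (Set.range fun u : A => (u ^ ·))

variable {A}

omit [Algebra ℂ A] in
lemma pow_mem_powerSums (u : A) : (u ^ ·) ∈ powerSums A :=
  AddSubmonoid.subset_closure ⟨u, rfl⟩

lemma pow_smul_mem_powerSums (c : ℂ) {v : ℕ → A} (hv : v ∈ powerSums A) :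
    (fun e => c ^ e • v e) ∈ powerSums A := by
  induction hv using AddSubmonoid.closure_induction with
  | mem _ h =>
    obtain ⟨u, rfl⟩ := h
    simpa only [smul_pow] using pow_mem_powerSums (c • u)
  | zero => simpa only [Pi.zero_apply, smul_zero, Pi.zero_def] using (powerSums A).zero_mem
  | add v w _ _ hv hw => simpa only [Pi.add_apply, smul_add, Pi.add_def] using add_mem hv hw

lemma IsPrimitiveRoot.sum_sq_mul_add_pow {m : ℕ} (hm : 1 ≤ m) {ζ : ℂ}
    (hζ : IsPrimitiveRoot ζ (m + 1)) (x : A) :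
    ∑ k ∈ range (m + 1), algebraMap ℂ A (ζ ^ k) ^ 2 * (algebraMap ℂ A (ζ ^ k) + x) ^ m
      = (m * (m + 1) : ℂ) • x := by
  have hdvd : ∀ j ∈ range (m + 1), (m + 1 ∣ j + 2 ↔ j = m - 1) := by
    intro j hj
    rw [mem_range] at hj
    refine ⟨fun h => ?_, fun h => ⟨1, by omega⟩⟩
    have := Nat.eq_of_dvd_of_lt_two_mul (by omega) h (by omega)
    omega
  calc ∑ k ∈ range (m + 1), algebraMap ℂ A (ζ ^ k) ^ 2 * (algebraMap ℂ A (ζ ^ k) + x) ^ m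
      = ∑ j ∈ range (m + 1), algebraMap ℂ A (∑ k ∈ range (m + 1), (ζ ^ (j + 2)) ^ k)
          * x ^ (m - j) * (m.choose j : A) := by
        simp_rw [add_pow, mul_sum, map_sum, sum_mul]
        rw [sum_comm]
        refine sum_congr rfl fun j _ => sum_congr rfl fun k _ => ?_
        simp only [← pow_mul, map_pow]
        ring
    _ = ∑ j ∈ range (m + 1), if j = m - 1 then
          algebraMap ℂ A (m + 1) * x ^ (m - j) * (m.choose j : A) else 0 := by
        refine sum_congr rfl fun j hj => ?_
        rw [hζ.geom_sum_pow_eq_ite, if_congr (hdvd j hj) rfl rfl]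
        split_ifs <;> simp
    _ = (m * (m + 1) : ℂ) • x := by
        rw [sum_ite_eq', if_pos (mem_range.2 (by omega)), show m - (m - 1) = 1 by omega,
          Nat.choose_symm (by omega), Nat.choose_one_right, Algebra.smul_def]
        push_cast
        ring

lemma exists_mem_powerSums_apply_eq {m : ℕ} (hm : 1 ≤ m) (q : A) :
    ∃ v ∈ powerSums A, v m = q := by
  obtain ⟨ζ, hζ⟩ : ∃ ζ : ℂ, IsPrimitiveRoot ζ (m + 1) :=
    ⟨_, Complex.isPrimitiveRoot_exp (m + 1) (by omega)⟩
  choose μ hμ using fun k : ℕ =>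
    IsAlgClosed.exists_pow_nat_eq ((m * (m + 1) : ℂ)⁻¹ * (ζ ^ k) ^ 2) (by omega : 0 < m)
  refine ⟨∑ k ∈ range (m + 1), ((μ k • (algebraMap ℂ A (ζ ^ k) + q)) ^ ·),
    sum_mem fun k _ => pow_mem_powerSums _, ?_⟩
  have hmm : (m * (m + 1) : ℂ) ≠ 0 := by norm_cast; positivity
  calc (∑ k ∈ range (m + 1), ((μ k • (algebraMap ℂ A (ζ ^ k) + q)) ^ ·)) m
      = (m * (m + 1) : ℂ)⁻¹ • ∑ k ∈ range (m + 1),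
          algebraMap ℂ A (ζ ^ k) ^ 2 * (algebraMap ℂ A (ζ ^ k) + q) ^ m := by
        rw [smul_sum, Finset.sum_apply]
        refine sum_congr rfl fun k _ => ?_
        rw [smul_pow, hμ, mul_smul, Algebra.smul_def ((ζ ^ k) ^ 2), map_pow]
    _ = q := by rw [hζ.sum_sq_mul_add_pow hm, smul_smul, inv_mul_cancel₀ hmm, one_smul]

lemma exists_mem_powerSums_apply_eq_and_apply_lt_eq_zero {m : ℕ} (hm : 1 ≤ m) (q : A) :
    ∃ v ∈ powerSums A, v m = q ∧ ∀ e, 1 ≤ e → e < m → v e = 0 := by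
  obtain ⟨ω, hω⟩ : ∃ ω : ℂ, IsPrimitiveRoot ω m := ⟨_, Complex.isPrimitiveRoot_exp m (by omega)⟩
  obtain ⟨v, hv, hvm⟩ := exists_mem_powerSums_apply_eq hm ((m : ℂ)⁻¹ • q)
  -- averaging over the `m`-th roots of unity keeps exactly the degrees divisible by `m`
  have hsum : ∀ e, (∑ j ∈ range m, fun e => (ω ^ j) ^ e • v e) e
      = (if m ∣ e then (m : ℂ) else 0) • v e := by
    intro e
    rw [Finset.sum_apply, ← hω.geom_sum_pow_eq_ite, sum_smul]
    simp only [← pow_mul, mul_comm]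
  refine ⟨∑ j ∈ range m, fun e => (ω ^ j) ^ e • v e,
    sum_mem fun j _ => pow_smul_mem_powerSums (ω ^ j) hv, ?_, fun e he hem => ?_⟩
  · rw [hsum, if_pos dvd_rfl, hvm, smul_smul, mul_inv_cancel₀ (by exact_mod_cast (by omega)),
      one_smul]
  · rw [hsum, if_neg (Nat.not_dvd_of_pos_of_lt (by omega) hem), zero_smul]

lemma exists_mem_powerSums_eqOn (c : ℕ → A) (n : ℕ) :
    ∃ v ∈ powerSums A, Set.EqOn v c (Set.Icc 1 n) := by
  induction n with
  | zero => exact ⟨0, zero_mem _, fun e he => by simp at he⟩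
  | succ n ih =>
    obtain ⟨v, hv, hvc⟩ := ih
    obtain ⟨w, hw, hwn, hw0⟩ := exists_mem_powerSums_apply_eq_and_apply_lt_eq_zero
      (by omega : 1 ≤ n + 1) (c (n + 1) - v (n + 1))
    refine ⟨v + w, add_mem hv hw, fun e ⟨he, hen⟩ => ?_⟩
    rcases (show e ≤ n ∨ e = n + 1 by omega) with hen | rfl
    · rw [Pi.add_apply, hvc ⟨he, hen⟩, hw0 e he (by omega), add_zero]
    · rw [Pi.add_apply, hwn, add_sub_cancel]

end PowerSums

lemma LinearMap.exists_natDegree_apply_le {R M : Type*} [CommRing R] [AddCommGroup M] [Module R M]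
    [Module.Finite R M] (L : M →ₗ[R] R[X]) : ∃ n, ∀ x, (L x).natDegree ≤ n := by
  obtain ⟨S, hS, hspan⟩ := Submodule.fg_def.1 (Module.Finite.iff_fg.1 (inferInstance :
    Module.Finite R (LinearMap.range L)))
  obtain ⟨n, hn⟩ := Polynomial.span_le_degreeLE_of_finite hS
  exact ⟨n, fun x => Polynomial.natDegree_le_iff_degree_le.2 <|
    Polynomial.mem_degreeLE.1 (hn (hspan ▸ LinearMap.mem_range_self L x))⟩

section Evaluation

variable {σ A : Type*} [CommRing A] [Algebra ℂ A] (V : Submodule ℂ (MvPolynomial σ ℂ))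

noncomputable def evalOn (g : σ → A) : V →ₗ[ℂ] A := (aeval g).toLinearMap ∘ₗ V.subtype

@[simp] lemma evalOn_apply (g : σ → A) (f : V) : evalOn V g f = aeval g (f : MvPolynomial σ ℂ) :=
  rfl

noncomputable def restrictToLine (w : σ → ℂ) : MvPolynomial σ ℂ →ₐ[ℂ] ℂ[X] :=
  aeval fun i => Polynomial.C (w i) * Polynomial.X

lemma aeval_restrictToLine (w : σ → ℂ) (u : A) (f : MvPolynomial σ ℂ) :
    Polynomial.aeval u (restrictToLine w f) = aeval (fun i => algebraMap ℂ A (w i) * u) f := by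
  rw [restrictToLine, ← AlgHom.comp_apply, comp_aeval]
  simp

lemma coeff_zero_restrictToLine (w : σ → ℂ) (f : MvPolynomial σ ℂ) :
    (restrictToLine w f).coeff 0 = constantCoeff f := by
  rw [Polynomial.coeff_zero_eq_aeval_zero, aeval_restrictToLine]
  simp [aeval_zero']

lemma eval_one_restrictToLine (w : σ → ℂ) (f : MvPolynomial σ ℂ) :
    (restrictToLine w f).eval 1 = eval w f := by
  rw [← Polynomial.coe_aeval_eq_eval, aeval_restrictToLine]
  simp

lemma smulRight_evalOn_mem_closure [FiniteDimensional ℂ V]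
    (h0 : ∀ f ∈ V, constantCoeff f = 0) (w : σ → ℂ) (q : A) :
    (evalOn V w).smulRight q ∈ AddSubmonoid.closure (Set.range (evalOn V (A := A))) := by
  set L := (restrictToLine w).toLinearMap ∘ₗ V.subtype
  obtain ⟨n, hn⟩ := L.exists_natDegree_apply_le
  have hL : ∀ f : V, (restrictToLine w (f : MvPolynomial σ ℂ)).natDegree < n + 1 :=
    fun f => Nat.lt_succ_of_le (hn f)
  -- `T v` sends `f` to `∑ₑ cₑ vₑ`, where `f (t w) = ∑ₑ cₑ tᵉ`; so `T (u ^ ·)` evaluates at `u w`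
  let T : (ℕ → A) →+ (V →ₗ[ℂ] A) :=
    { toFun v := ∑ e ∈ range (n + 1), (Polynomial.lcoeff ℂ e ∘ₗ L).smulRight (v e)
      map_zero' := by ext; simp
      map_add' v v' := by ext; simp [sum_add_distrib] }
  have hTu : ∀ u : A, T (u ^ ·) = evalOn V fun i => algebraMap ℂ A (w i) * u := by
    intro u
    ext f
    rw [evalOn_apply, ← aeval_restrictToLine, Polynomial.aeval_eq_sum_range' (hL f)]
    simp [T, L]
  have hT : powerSums A ≤ (AddSubmonoid.closure (Set.range (evalOn V))).comap T :=
    AddSubmonoid.closure_le.2 <| Set.range_subset_iff.2 fun u => by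
      simpa [hTu] using AddSubmonoid.subset_closure (Set.mem_range_self _)
  obtain ⟨v, hv, hvq⟩ := exists_mem_powerSums_eqOn (fun _ => q) n
  have hTv : T v = (evalOn V w).smulRight q := by
    ext f
    calc T v f
        = ∑ e ∈ range (n + 1), (restrictToLine w (f : MvPolynomial σ ℂ)).coeff e • v e := by
          simp [T, L]
      _ = ∑ e ∈ range (n + 1), (restrictToLine w (f : MvPolynomial σ ℂ)).coeff e • q := by
          refine sum_congr rfl fun e he => ?_
          rcases Nat.eq_zero_or_pos e with rfl | he1
          · rw [coeff_zero_restrictToLine, h0 f f.2, zero_smul, zero_smul]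
          · rw [hvq ⟨he1, Nat.lt_succ_iff.1 (mem_range.1 he)⟩]
      _ = (restrictToLine w (f : MvPolynomial σ ℂ)).eval 1 • q := by
          rw [Polynomial.eval_eq_sum_range' (hL f), sum_smul]
          simp
      _ = (evalOn V w).smulRight q f := by
          rw [eval_one_restrictToLine]
          rfl
  exact hTv ▸ hT hv

lemma span_range_evalOn_eq_top [FiniteDimensional ℂ V] :
    Submodule.span ℂ (Set.range (evalOn V (A := ℂ))) = ⊤ := by
  refine Submodule.span_eq_top_of_ne_zero fun f hf => ?_
  by_contra! h
  refine hf (Subtype.ext (MvPolynomial.funext fun w => ?_))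
  simpa using h _ (Set.mem_range_self w)

theorem closure_range_evalOn_eq_top [FiniteDimensional ℂ V] (h0 : ∀ f ∈ V, constantCoeff f = 0) :
    AddSubmonoid.closure (Set.range (evalOn V (A := A))) = ⊤ := by
  set E := AddSubmonoid.closure (Set.range (evalOn V (A := A)))
  let K : Submodule ℂ (Module.Dual ℂ V) :=
    { carrier := {ℓ | ∀ q : A, ℓ.smulRight q ∈ E}
      add_mem' := fun hℓ hℓ' q => by
        convert add_mem (hℓ q) (hℓ' q) using 1
        ext
        simp [add_smul]
      zero_mem' := fun q => by simp
      smul_mem' := fun c ℓ hℓ q => by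
        convert hℓ (c • q) using 1
        ext
        simp [mul_comm c, mul_smul] }
  have hK : K = ⊤ := eq_top_iff.2 <| (span_range_evalOn_eq_top V).ge.trans <|
    Submodule.span_le.2 <| Set.range_subset_iff.2 (smulRight_evalOn_mem_closure V h0)
  refine eq_top_iff.2 fun φ _ => ?_
  let B := Module.finBasis ℂ V
  have hφ : φ = ∑ i, (B.coord i).smulRight (φ (B i)) :=
    B.ext fun j => by simp [Finsupp.single_apply]
  rw [hφ]
  exact sum_mem fun i _ => (hK ▸ Submodule.mem_top : B.coord i ∈ K) (φ (B i))

end Evaluation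

lemma IsRationalSeries.map {R S : Type*} [CommRing R] [CommRing S] (ρ : R →+* S)
    {f : PowerSeries R} (hf : IsRationalSeries f) : IsRationalSeries (PowerSeries.map ρ f) := by
  obtain ⟨q, p, hq, hqf⟩ := hf
  refine ⟨q.map ρ, p.map ρ, by simp [hq], ?_⟩
  rw [Polynomial.polynomial_map_coe, Polynomial.polynomial_map_coe, ← map_mul, hqf]

lemma isRationalSeries_map_iff_of_comp_eq_id {R S : Type*} [CommRing R] [CommRing S]
    (ρ : R →+* S) (τ : S →+* R) (h : τ.comp ρ = RingHom.id R) (f : PowerSeries R) :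
    IsRationalSeries (PowerSeries.map ρ f) ↔ IsRationalSeries f := by
  refine ⟨fun hf => ?_, IsRationalSeries.map ρ⟩
  simpa [← RingHom.comp_apply, ← PowerSeries.map_comp, h] using hf.map τ

lemma AddSubmonoid.exists_list_map_sum_eq_of_mem_closure_range {ι M : Type*} [AddMonoid M]
    {f : ι → M} {x : M} (hx : x ∈ AddSubmonoid.closure (Set.range f)) :
    ∃ l : List ι, (l.map f).sum = x := by
  rw [← FreeAddMonoid.mrange_lift] at hx
  obtain ⟨l, rfl⟩ := hx
  exact ⟨l.toList, (FreeAddMonoid.lift_apply f l).symm⟩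

lemma List.sum_univ_fin_getD {α M : Type*} [AddCommMonoid M] (f : α → M) {d : α} (hd : f d = 0)
    (l : List α) {r : ℕ} (hr : l.length ≤ r) :
    ∑ s : Fin r, f (l.getD s d) = (l.map f).sum := by
  induction l generalizing r with
  | nil => simp [hd]
  | cons a l ih =>
    cases r with
    | zero => simp at hr
    | succ r =>
      rw [Fin.sum_univ_succ, List.map_cons, List.sum_cons, ← ih (by simpa using hr)]
      simp

lemma constantCoeff_eq_zero_of_mem_span {σ R : Type*} [CommRing R] {S : Set (MvPolynomial σ R)}
    (hS : ∀ f ∈ S, ∃ d : ℕ, 1 ≤ d ∧ f ∈ homogeneousSubmodule σ R d)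
    {f : MvPolynomial σ R} (hf : f ∈ Submodule.span R S) : constantCoeff f = 0 := by
  induction hf using Submodule.span_induction with
  | mem f hf =>
    obtain ⟨d, hd, hfd⟩ := hS f hf
    exact (mem_homogeneousSubmodule d f).1 hfd |>.coeff_eq_zero (by simp; omega)
  | zero => simp
  | add f g _ _ hf hg => simp [hf, hg]
  | smul c f _ hf => simp [hf]

theorem exists_comp_iMap_eq_id (N κ : ℕ) (V : Submodule ℂ (MvPolynomial (Fin N) ℂ))
    (b : Module.Basis (Fin κ) ℂ V) (h0 : ∀ f ∈ V, constantCoeff f = 0) :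
    ∃ r₀, ∀ r, r₀ ≤ r → ∃ π : MvPolynomial (Fin r × Fin N) ℂ →ₐ[ℂ] MvPolynomial (Fin κ) ℂ,
      π.comp (iMap N κ r V b) = AlgHom.id ℂ _ := by
  have := Module.Finite.of_basis b
  have hX : (b.constr ℂ X : V →ₗ[ℂ] MvPolynomial (Fin κ) ℂ) ∈
      AddSubmonoid.closure (Set.range (evalOn V)) := by
    rw [closure_range_evalOn_eq_top V h0]
    exact AddSubmonoid.mem_top _
  obtain ⟨L, hL⟩ := AddSubmonoid.exists_list_map_sum_eq_of_mem_closure_range hX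
  refine ⟨L.length, fun r hr => ⟨aeval fun p => L.getD p.1 0 p.2, algHom_ext fun v => ?_⟩⟩
  calc _ = ∑ s : Fin r, evalOn V (L.getD s 0) (b v) := by
        rw [AlgHom.comp_apply, iMap, aeval_X, map_sum]
        refine sum_congr rfl fun s _ => ?_
        rw [aeval_rename]
        rfl
    _ = (L.map fun g => evalOn V g (b v)).sum :=
        List.sum_univ_fin_getD (fun g => evalOn V g (b v)) (by
          rw [evalOn_apply, Pi.zero_def, aeval_zero', h0 _ (b v).2, map_zero]) L hr
    _ = X v := by
        rw [← b.constr_basis ℂ X v, ← hL, ← LinearMap.applyₗ_apply_apply, map_list_sum,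
          List.map_map]
        rfl

/-- If `V` is a finite-dimensional subspace of `Sym(W)` spanned by homogeneous elements of
positive degree, then for all sufficiently large `r`: a power series with coefficients in
`Sym(V)` is rational if and only if its coefficientwise image under `i_r` is rational as a
power series with coefficients in `Sym(W)^{⊗r}`. -/
theorem iMap_rational_iff_for_large_r (N κ : ℕ) (V : Submodule ℂ (MvPolynomial (Fin N) ℂ))
    (b : Module.Basis (Fin κ) ℂ V)
    (hV : ∃ S : Set (MvPolynomial (Fin N) ℂ), V = Submodule.span ℂ S ∧
      ∀ f ∈ S, ∃ d : ℕ, 1 ≤ d ∧ f ∈ MvPolynomial.homogeneousSubmodule (Fin N) ℂ d) :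
    ∃ r₀ : ℕ, ∀ r : ℕ, r₀ ≤ r → ∀ f : PowerSeries (MvPolynomial (Fin κ) ℂ),
      IsRationalSeries f ↔
        IsRationalSeries (PowerSeries.map (iMap N κ r V b).toRingHom f) := by
  obtain ⟨S, hVS, hS⟩ := hV
  obtain ⟨r₀, hr₀⟩ := exists_comp_iMap_eq_id N κ V b fun f hf =>
    constantCoeff_eq_zero_of_mem_span hS (hVS ▸ hf)
  refine ⟨r₀, fun r hr f => ?_⟩
  obtain ⟨π, hπ⟩ := hr₀ r hr
  exact (isRationalSeries_map_iff_of_comp_eq_id _ π.toRingHom (congrArg AlgHom.toRingHom hπ) f).symm
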